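/- arXiv:2505.17831 — 3 statements merged into one kernel-verified Lean document; each statement's English description precedes it below -/
import Mathlib

section
/- If R₀ = αΛ/(μ(γI+μ)) < 1 and all parameters Λ, μ, α, γI, γE are positive, then the delinquence-free equilibrium (Λ/μ, 0, 0) of the crime model is locally asymptotically stable (every eigenvalue of the Jacobian there has negative real part). -/
open Matrix

/-!
The Jacobian at the delinquence-free equilibrium is upper triangular, so its eigenvalues are its
diagonal entries `-μ`, `αΛ/μ - (γI + μ)` and `-(γE + μ)`. The middle one is negative exactly
because `R₀ = (αΛ/μ) / (γI + μ) < 1`.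
-/

namespace Matrix

variable {n K : Type*} [Fintype n] [DecidableEq n] [LinearOrder n] [Field K]

theorem mem_spectrum_iff_exists_diag_eq_of_isUpperTriangular {M : Matrix n n K}
    (hM : M.IsUpperTriangular) {z : K} : z ∈ spectrum K M ↔ ∃ i, M i i = z := by
  simp only [mem_spectrum_iff_isRoot_charpoly, charpoly_of_isUpperTriangular M hM,
    Polynomial.IsRoot, Polynomial.eval_prod, Polynomial.eval_sub, Polynomial.eval_X,
    Polynomial.eval_C, Finset.prod_eq_zero_iff, Finset.mem_univ, true_and, sub_eq_zero]
  exact exists_congr fun _ => eq_comm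

theorem re_neg_of_mem_spectrum_map_of_isUpperTriangular {M : Matrix n n ℝ}
    (hM : M.IsUpperTriangular) (hdiag : ∀ i, M i i < 0) :
    ∀ z ∈ spectrum ℂ (M.map (algebraMap ℝ ℂ)), z.re < 0 := by
  intro z hz
  obtain ⟨i, rfl⟩ := (mem_spectrum_iff_exists_diag_eq_of_isUpperTriangular
    (hM.map (algebraMap ℝ ℂ))).mp hz
  simpa using hdiag i

end Matrix

theorem div_sub_neg_of_div_mul_lt_one {𝕜 : Type*} [Field 𝕜] [LinearOrder 𝕜]
    [IsStrictOrderedRing 𝕜] {a μ ν : 𝕜} (hν : 0 < ν) (h : a / (μ * ν) < 1) :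
    a / μ - ν < 0 := by
  rw [← div_div, div_lt_one hν] at h
  exact sub_neg.mpr h

theorem stmt9_general (Λ μ α γI γE : ℝ) (hμ : 0 < μ)
    (hγI : 0 < γI) (hγE : 0 < γE)
    (hR₀ : α * Λ / (μ * (γI + μ)) < 1) :
    ∀ z ∈ spectrum ℂ
      ((!![-μ, γI - α * Λ / μ, γE;
           0, α * Λ / μ - γI - μ, 0;
           0, 0, -γE - μ] : Matrix (Fin 3) (Fin 3) ℝ).map (algebraMap ℝ ℂ)),
      z.re < 0 := by
  have hmiddle : α * Λ / μ - γI - μ < 0 := by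
    have := div_sub_neg_of_div_mul_lt_one (by linarith) hR₀
    linarith
  apply re_neg_of_mem_spectrum_map_of_isUpperTriangular
  · intro i j hji
    fin_cases i <;> fin_cases j <;> simp_all
  · intro i
    fin_cases i <;> simp <;> linarith

/-- if R₀ = αΛ/(μ(γI+μ)) < 1 then every eigenvalue of the Jacobian at the
delinquence-free equilibrium (Λ/μ, 0, 0) has negative real part. -/
theorem stmt9 (Λ μ α γI γE ρ : ℝ) (hΛ : 0 < Λ) (hμ : 0 < μ) (hα : 0 < α)
    (hγI : 0 < γI) (hγE : 0 < γE)
    (hR₀ : α * Λ / (μ * (γI + μ)) < 1) :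
    ∀ z ∈ spectrum ℂ
      ((!![-μ, γI - α * Λ / μ, γE;
           0, α * Λ / μ - γI - μ, 0;
           0, 0, -γE - μ] : Matrix (Fin 3) (Fin 3) ℝ).map (algebraMap ℝ ℂ)),
      z.re < 0 :=
  stmt9_general Λ μ α γI γE hμ hγI hγE hR₀
end

section
/- The eigenvalues of the Jacobian at the education-free equilibrium (X*, I*, E*) = ((γI+μ)/α, N₀-(γI+μ)/α, 0), namely the matrix [[γI - N₀α, -μ, γE],[N₀α - μ - γI, 0, -ρ(N₀-(γI+μ)/α)],[0, 0, ρ(N₀-(γI+μ)/α) - μ - γE]], are λ₁ = -μ, λ₂ = (1-R₀)(μ+γI), and λ₃ = (ρ/α)(R₀-1)(μ+γI) - μ - γE, where R₀ = N₀α/(γI+μ). -/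
/-! The Jacobian is block upper triangular: its characteristic polynomial is the product of the
quadratic `x² - (γI - N₀α) x + μ (N₀α - μ - γI)`, with roots `-μ` and `μ + γI - N₀α`, and
`x - (ρ (N₀ - (γI + μ)/α) - μ - γE)`. Rewriting in terms of `R₀` gives the three eigenvalues. -/

namespace Matrix

theorem eval_charpoly_fin_three_of_block_triangular {R : Type*} [CommRing R]
    (a b c d g e f x : R) :
    (!![a, b, c; d, g, e; 0, 0, f]).charpoly.eval x = ((x - a) * (x - g) - b * d) * (x - f) := by
  rw [eval_charpoly, det_fin_three]
  simp only [scalar_apply, sub_apply, diagonal_apply_eq, diagonal_apply_ne, of_apply, cons_val',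
    cons_val_zero, cons_val_one, cons_val, cons_val_fin_one, ne_eq, Fin.reduceEq, not_false_eq_true]
  ring

theorem spectrum_fin_three_of_block_triangular {K : Type*} [Field K]
    {a b c d g e f l₁ l₂ : K} (hsum : l₁ + l₂ = a + g) (hprod : l₁ * l₂ = a * g - b * d) :
    spectrum K !![a, b, c; d, g, e; 0, 0, f] = {l₁, l₂, f} := by
  ext x
  have hquad : (x - a) * (x - g) - b * d = (x - l₁) * (x - l₂) := by
    linear_combination x * hsum - hprod
  rw [mem_spectrum_iff_isRoot_charpoly, Polynomial.IsRoot.def,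
    eval_charpoly_fin_three_of_block_triangular, hquad]
  simp only [Set.mem_insert_iff, Set.mem_singleton_iff, mul_eq_zero, sub_eq_zero, or_assoc]

end Matrix

theorem stmt10_general (α ρ μ γI γE N₀ : ℝ) (hα : 0 < α) (hμ : 0 < μ)
    (hγI : 0 < γI)
    (R₀ : ℝ) (hR₀ : R₀ = N₀ * α / (γI + μ)) :
    spectrum ℝ
        (!![γI - N₀ * α, -μ, γE;
            N₀ * α - μ - γI, 0, -ρ * (N₀ - (γI + μ) / α);
            0, 0, ρ * (N₀ - (γI + μ) / α) - μ - γE] : Matrix (Fin 3) (Fin 3) ℝ) =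
      {-μ, (1 - R₀) * (μ + γI), (ρ / α) * (R₀ - 1) * (μ + γI) - μ - γE} := by
  have hγμ : γI + μ ≠ 0 := by positivity
  have heig₂ : (1 - R₀) * (μ + γI) = μ + γI - N₀ * α := by
    rw [hR₀]; field_simp; ring
  have heig₃ : (ρ / α) * (R₀ - 1) * (μ + γI) = ρ * (N₀ - (γI + μ) / α) := by
    rw [hR₀]; field_simp; ring
  rw [heig₂, heig₃]
  exact Matrix.spectrum_fin_three_of_block_triangular (by ring) (by ring)

/-- the eigenvalues of the Jacobian at the education-free equilibrium are
λ₁ = -μ, λ₂ = (1-R₀)(μ+γI), λ₃ = (ρ/α)(R₀-1)(μ+γI) - μ - γE, where R₀ = N₀α/(γI+μ). -/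
theorem stmt10 (α ρ μ γI γE N₀ : ℝ) (hα : 0 < α) (hρ : 0 < ρ) (hμ : 0 < μ)
    (hγI : 0 < γI) (hγE : 0 < γE) (hN₀ : 0 < N₀)
    (R₀ : ℝ) (hR₀ : R₀ = N₀ * α / (γI + μ)) :
    spectrum ℝ
        (!![γI - N₀ * α, -μ, γE;
            N₀ * α - μ - γI, 0, -ρ * (N₀ - (γI + μ) / α);
            0, 0, ρ * (N₀ - (γI + μ) / α) - μ - γE] : Matrix (Fin 3) (Fin 3) ℝ) =
      {-μ, (1 - R₀) * (μ + γI), (ρ / α) * (R₀ - 1) * (μ + γI) - μ - γE} :=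
  stmt10_general α ρ μ γI γE N₀ hα hμ hγI R₀ hR₀
end

section
/- Let R₀ = N₀α/(γI+μ) and C̄ = 1 + α(γE+μ)/(ρ(γI+μ)). If 1 < R₀ < C̄, then all three eigenvalues -μ, (1-R₀)(μ+γI), and (ρ/α)(R₀-1)(μ+γI) - μ - γE of the education-free Jacobian are strictly negative. -/
/- The threshold `C̄` is exactly the value of `R₀` at which the third eigenvalue vanishes:
clearing the positive denominators `α` and `ρ (γI + μ)` turns `R₀ < C̄` into
`(ρ / α) (R₀ - 1) (γI + μ) < γE + μ`. The other two eigenvalues are negative by sign alone. -/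

lemma div_mul_sub_one_mul_lt_of_lt_one_add_div {a r k c R : ℝ} (ha : 0 < a) (hrk : 0 < r * k)
    (h : R < 1 + a * c / (r * k)) : r / a * (R - 1) * k < c := by
  have hR : (R - 1) * (r * k) < a * c := (lt_div_iff₀ hrk).mp (by linarith)
  rw [div_mul_eq_mul_div, div_mul_eq_mul_div, div_lt_iff₀ ha]
  linarith

theorem stmt11_general (α ρ μ γI γE R₀ : ℝ) (hα : 0 < α) (hρ : 0 < ρ) (hμ : 0 < μ)
    (hγI : 0 < γI)
    (h1 : 1 < R₀) (h2 : R₀ < 1 + α * (γE + μ) / (ρ * (γI + μ))) :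
    -μ < 0 ∧ (1 - R₀) * (μ + γI) < 0 ∧
      (ρ / α) * (R₀ - 1) * (μ + γI) - μ - γE < 0 := by
  have hγIμ : 0 < γI + μ := by positivity
  refine ⟨neg_neg_of_pos hμ, mul_neg_of_neg_of_pos (by linarith) (by linarith), ?_⟩
  have h3 := div_mul_sub_one_mul_lt_of_lt_one_add_div hα (mul_pos hρ hγIμ) h2
  rw [add_comm μ γI]
  linarith

/-- if 1 < R₀ < C̄ = 1 + α(γE+μ)/(ρ(γI+μ)), then the three eigenvalues of
the education-free Jacobian are strictly negative. -/
theorem stmt11 (α ρ μ γI γE N₀ R₀ : ℝ) (hα : 0 < α) (hρ : 0 < ρ) (hμ : 0 < μ)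
    (hγI : 0 < γI) (hγE : 0 < γE) (hN₀ : 0 < N₀)
    (hR₀ : R₀ = N₀ * α / (γI + μ))
    (h1 : 1 < R₀) (h2 : R₀ < 1 + α * (γE + μ) / (ρ * (γI + μ))) :
    -μ < 0 ∧ (1 - R₀) * (μ + γI) < 0 ∧
      (ρ / α) * (R₀ - 1) * (μ + γI) - μ - γE < 0 :=
  stmt11_general α ρ μ γI γE R₀ hα hρ hμ hγI h1 h2
end
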